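/- Let G be a finite simple graph in which every vertex has degree at most 2 and which has no cycle of length 3i+1 and no cycle of length 3i+2 for any positive integer i. Let D be a set of vertices of G such that no path on three distinct vertices of G has all three of its vertices in D. Suppose p_1, …, p_{e+1} and p'_1, …, p'_e are paths on three distinct vertices of G (paths of length 2) such that, in the polynomial ring k[x_v : v ∈ V(G)], the monomial ∏_{j=1}^{e+1} m(p_j) divides (∏_{j=1}^{e} m(p'_j)) · ∏_{z ∈ D} x_z, where m(p) denotes the product of the variables of the three vertices of the path p. Then there exist a positive integer i and two distinct vertices z_1, z_2 ∈ D such that G contains a path of length 3i+1 or of length 3i+2 connecting z_1 and z_2. -/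

import Mathlib

open MvPolynomial

namespace Stmt15Aux
set_option linter.unusedSectionVars false
set_option maxHeartbeats 1000000

open SimpleGraph Finset Walk

variable {V : Type*} [Fintype V] [DecidableEq V] {G : SimpleGraph V} [DecidableRel G.Adj]

lemma deg2 (hdeg : ∀ v : V, G.degree v ≤ 2) {v x y w : V}
    (hx : G.Adj v x) (hy : G.Adj v y) (hw : G.Adj v w) (hxy : x ≠ y) :
    w = x ∨ w = y := by
  by_contra hcon
  push_neg at hcon
  have hsub : ({w, x, y} : Finset V) ⊆ G.neighborFinset v := by
    intro z hz
    simp only [Finset.mem_insert, Finset.mem_singleton] at hz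
    rcases hz with rfl | rfl | rfl <;> simpa [SimpleGraph.mem_neighborFinset]
  have h3 : ({w, x, y} : Finset V).card = 3 := by
    rw [Finset.card_insert_of_notMem (by simp [hcon.1, hcon.2]),
      Finset.card_insert_of_notMem (by simp [hxy]), Finset.card_singleton]
  have h4 := Finset.card_le_card hsub
  rw [h3, G.card_neighborFinset_eq_degree] at h4
  have := hdeg v
  omega

lemma getVert_injOn' {u v : V} {p : G.Walk u v} (hp : p.IsPath) :
    ∀ i ≤ p.length, ∀ j ≤ p.length, p.getVert i = p.getVert j → i = j := by
  induction p with
  | nil => intro i hi j hj _; simp at hi hj; omega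
  | cons h q ih =>
    rw [SimpleGraph.Walk.cons_isPath_iff] at hp
    intro i hi j hj hij
    match i, j with
    | 0, 0 => rfl
    | 0, (j+1) =>
      exfalso
      apply hp.2
      rw [SimpleGraph.Walk.mem_support_iff_exists_getVert]
      rw [SimpleGraph.Walk.getVert_cons_succ] at hij
      exact ⟨j, hij.symm, by simp [SimpleGraph.Walk.length_cons] at hj; omega⟩
    | (i+1), 0 =>
      exfalso
      apply hp.2
      rw [SimpleGraph.Walk.mem_support_iff_exists_getVert]
      rw [SimpleGraph.Walk.getVert_cons_succ] at hij
      exact ⟨i, hij, by simp [SimpleGraph.Walk.length_cons] at hi; omega⟩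
    | (i+1), (j+1) =>
      rw [SimpleGraph.Walk.getVert_cons_succ, SimpleGraph.Walk.getVert_cons_succ] at hij
      simp only [SimpleGraph.Walk.length_cons] at hi hj
      have := ih hp.1 i (by omega) j (by omega) hij
      omega

lemma edge_eq_getVert {u v : V} (p : G.Walk u v) :
    ∀ e ∈ p.edges, ∃ i, i < p.length ∧ e = s(p.getVert i, p.getVert (i+1)) := by
  induction p with
  | nil => simp
  | cons h q ih =>
    intro e he
    rw [SimpleGraph.Walk.edges_cons, List.mem_cons] at he
    rcases he with rfl | he
    · refine ⟨0, by simp [SimpleGraph.Walk.length_cons], ?_⟩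
      rw [SimpleGraph.Walk.getVert_zero]
      rw [show (SimpleGraph.Walk.cons h q).getVert 1 = q.getVert 0 from rfl,
        SimpleGraph.Walk.getVert_zero]
    · obtain ⟨i, hi, hei⟩ := ih e he
      refine ⟨i + 1, by simp [SimpleGraph.Walk.length_cons]; omega, ?_⟩
      rwa [SimpleGraph.Walk.getVert_cons_succ, SimpleGraph.Walk.getVert_cons_succ]

lemma exists_seg {u v : V} {p : G.Walk u v} (hp : p.IsPath) :
    ∀ (d s : ℕ), s + d ≤ p.length →
    ∃ w : G.Walk (p.getVert s) (p.getVert (s + d)), w.IsPath ∧ w.length = d ∧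
      ∀ x ∈ w.support, ∃ i, s ≤ i ∧ i ≤ s + d ∧ x = p.getVert i := by
  intro d
  induction d with
  | zero =>
    intro s _
    exact ⟨SimpleGraph.Walk.nil, by simp, by simp, by
      intro x hx
      simp only [SimpleGraph.Walk.support_nil, List.mem_singleton] at hx
      exact ⟨s, le_rfl, by omega, hx⟩⟩
  | succ d ih =>
    intro s hs
    obtain ⟨w, hw1, hw2, hw3⟩ := ih (s + 1) (by omega)
    have hcast : s + 1 + d = s + (d + 1) := by omega
    have hadj : G.Adj (p.getVert s) (p.getVert (s + 1)) :=
      p.adj_getVert_succ (by omega)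
    refine ⟨SimpleGraph.Walk.cons hadj (w.copy rfl (by rw [hcast])), ?_, ?_, ?_⟩
    · rw [SimpleGraph.Walk.cons_isPath_iff]
      refine ⟨by simpa using hw1, ?_⟩
      rw [SimpleGraph.Walk.support_copy]
      intro hmem
      obtain ⟨i, hi1, hi2, hi3⟩ := hw3 _ hmem
      have := getVert_injOn' hp s (by omega) i (by omega) hi3
      omega
    · simp [SimpleGraph.Walk.length_cons, hw2]
    · intro x hx
      rw [SimpleGraph.Walk.support_cons, List.mem_cons] at hx
      rcases hx with rfl | hx
      · exact ⟨s, le_rfl, by omega, rfl⟩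
      · rw [SimpleGraph.Walk.support_copy] at hx
        obtain ⟨i, hi1, hi2, hi3⟩ := hw3 _ hx
        exact ⟨i, by omega, by omega, hi3⟩


lemma endgame_sorted {u v : V} {p : G.Walk u v} (hp : p.IsPath) (D : Finset V)
    (hD : ∀ x y z : V, G.Adj x y → G.Adj y z → x ≠ z → ¬(x ∈ D ∧ y ∈ D ∧ z ∈ D))
    {s0 s1 s2 : ℕ} (h01 : s0 < s1) (h12 : s1 < s2) (h2 : s2 ≤ p.length)
    (hr : s0 % 3 ≠ s2 % 3)
    (hd0 : p.getVert s0 ∈ D) (hd1 : p.getVert s1 ∈ D) (hd2 : p.getVert s2 ∈ D) :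
    ∃ i : ℕ, 1 ≤ i ∧ ∃ z₁ ∈ D, ∃ z₂ ∈ D, z₁ ≠ z₂ ∧
      ∃ q : G.Walk z₁ z₂, q.IsPath ∧ (q.length = 3 * i + 1 ∨ q.length = 3 * i + 2) := by
  obtain ⟨d, rfl⟩ : ∃ d, s2 = s0 + d := ⟨s2 - s0, by omega⟩
  by_cases hd4 : 4 ≤ d
  · obtain ⟨w, hw1, hw2, _⟩ := exists_seg hp d s0 (by omega)
    refine ⟨d / 3, by omega, p.getVert s0, hd0, p.getVert (s0 + d), hd2, ?_, w, hw1, ?_⟩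
    · intro hcon
      have := getVert_injOn' hp s0 (by omega) (s0 + d) (by omega) hcon
      omega
    · omega
  · -- d ≤ 3, d % 3 ≠ 0, s0 < s1 < s0 + d so d = 2, s1 = s0 + 1
    exfalso
    have hd2' : d = 2 := by omega
    have he1 : s1 = s0 + 1 := by omega
    refine hD (p.getVert s0) (p.getVert (s0 + 1)) (p.getVert (s0 + 2))
      (p.adj_getVert_succ (by omega)) ?_ ?_ ⟨hd0, by rwa [← he1], by rwa [← hd2']⟩
    · have := p.adj_getVert_succ (i := s0 + 1) (by omega)
      rwa [show s0 + 1 + 1 = s0 + 2 by omega] at this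
    · intro hcon
      have := getVert_injOn' hp s0 (by omega) (s0 + 2) (by omega) hcon
      omega

lemma endgame {u v : V} {p : G.Walk u v} (hp : p.IsPath) (D : Finset V)
    (hD : ∀ x y z : V, G.Adj x y → G.Adj y z → x ≠ z → ¬(x ∈ D ∧ y ∈ D ∧ z ∈ D))
    {t0 t1 t2 : ℕ} (h0 : t0 ≤ p.length) (h1 : t1 ≤ p.length) (h2 : t2 ≤ p.length)
    (hr01 : t0 % 3 ≠ t1 % 3) (hr12 : t1 % 3 ≠ t2 % 3) (hr02 : t0 % 3 ≠ t2 % 3)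
    (hd0 : p.getVert t0 ∈ D) (hd1 : p.getVert t1 ∈ D) (hd2 : p.getVert t2 ∈ D) :
    ∃ i : ℕ, 1 ≤ i ∧ ∃ z₁ ∈ D, ∃ z₂ ∈ D, z₁ ≠ z₂ ∧
      ∃ q : G.Walk z₁ z₂, q.IsPath ∧ (q.length = 3 * i + 1 ∨ q.length = 3 * i + 2) := by
  rcases Nat.lt_trichotomy t0 t1 with ha | ha | ha
  · rcases Nat.lt_trichotomy t1 t2 with hb | hb | hb
    · exact endgame_sorted hp D hD ha hb h2 hr02 hd0 hd1 hd2
    · omega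
    · rcases Nat.lt_trichotomy t0 t2 with hc | hc | hc
      · exact endgame_sorted hp D hD hc hb h1 hr01 hd0 hd2 hd1
      · omega
      · exact endgame_sorted hp D hD hc ha h1 (Ne.symm hr12) hd2 hd0 hd1
  · omega
  · rcases Nat.lt_trichotomy t0 t2 with hb | hb | hb
    · exact endgame_sorted hp D hD ha hb h2 hr12 hd1 hd0 hd2
    · omega
    · rcases Nat.lt_trichotomy t1 t2 with hc | hc | hc
      · exact endgame_sorted hp D hD hc hb h0 (Ne.symm hr01) hd1 hd2 hd0
      · omega
      · exact endgame_sorted hp D hD hc ha h0 (Ne.symm hr02) hd2 hd1 hd0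


lemma exists_spanning_path (hdeg : ∀ v : V, G.degree v ≤ 2)
    (hcycle : ∀ i : ℕ, 1 ≤ i → ∀ (v : V) (p : G.Walk v v), p.IsCycle →
      p.length ≠ 3 * i + 1 ∧ p.length ≠ 3 * i + 2)
    (v0 : V) (hv0 : ∃ x z : V, G.Adj x v0 ∧ G.Adj v0 z ∧ x ≠ z) :
    ∃ (u w : V) (p : G.Walk u w), p.IsPath ∧
      (∀ x, G.Reachable v0 x ↔ x ∈ p.support) ∧
      (∀ x y z : V, G.Adj x y → G.Adj y z → x ≠ z → y ∈ p.support →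
        ∃ t₁ t₂ t₃ : ℕ, t₁ ≤ p.length ∧ t₂ ≤ p.length ∧ t₃ ≤ p.length ∧
          x = p.getVert t₁ ∧ y = p.getVert t₂ ∧ z = p.getVert t₃ ∧
          t₁ % 3 ≠ t₂ % 3 ∧ t₂ % 3 ≠ t₃ % 3 ∧ t₁ % 3 ≠ t₃ % 3) := by
  classical
  obtain ⟨x0, z0, hx0, hz0, hxz0⟩ := hv0
  set N := Fintype.card V with hN
  set P : ℕ → Prop := fun l => ∃ (x y : V) (q : G.Walk x y),
    q.IsPath ∧ G.Reachable v0 x ∧ q.length = l with hPdef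
  have hP0 : P 0 := ⟨v0, v0, SimpleGraph.Walk.nil, by simp, SimpleGraph.Reachable.refl _, rfl⟩
  have hPbd : ∀ l, P l → l ≤ N := by
    rintro l ⟨x, y, q, hq, _, rfl⟩
    exact le_of_lt hq.length_lt
  set m := Nat.findGreatest P N with hm
  have hPm : P m := Nat.findGreatest_spec (hPbd 0 hP0) hP0
  have hmax : ∀ l, P l → l ≤ m := by
    intro l hl
    by_contra hcon
    exact Nat.findGreatest_is_greatest (by omega) (hPbd l hl) hl
  obtain ⟨u, w, p, hp, hru, hlen⟩ := hPm
  have hinj := getVert_injOn' hp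
  have hgadj : ∀ i, i < p.length → G.Adj (p.getVert i) (p.getVert (i+1)) :=
    fun i hi => p.adj_getVert_succ hi
  have hmem : ∀ i, i ≤ p.length → p.getVert i ∈ p.support :=
    fun i hi => SimpleGraph.Walk.mem_support_iff_exists_getVert.2 ⟨i, rfl, hi⟩
  have hsup : ∀ x ∈ p.support, ∃ i, i ≤ p.length ∧ x = p.getVert i := by
    intro x hx
    obtain ⟨i, h1, h2⟩ := SimpleGraph.Walk.mem_support_iff_exists_getVert.1 hx
    exact ⟨i, h2, h1.symm⟩
  have hreach : ∀ x ∈ p.support, G.Reachable v0 x :=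
    fun x hx => hru.trans ⟨p.takeUntil x hx⟩
  have hnbru : ∀ z, G.Adj z u → z ∈ p.support := by
    intro z hz
    by_contra hns
    have hPl : P (p.length + 1) := ⟨z, w, SimpleGraph.Walk.cons hz p,
      (SimpleGraph.Walk.cons_isPath_iff hz p).2 ⟨hp, hns⟩,
      hru.trans hz.symm.reachable, by simp [SimpleGraph.Walk.length_cons]⟩
    have := hmax _ hPl
    omega
  have hnbrw : ∀ z, G.Adj z w → z ∈ p.support := by
    intro z hz
    by_contra hns
    have hPl : P (p.length + 1) := ⟨z, u, SimpleGraph.Walk.cons hz p.reverse,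
      (SimpleGraph.Walk.cons_isPath_iff hz p.reverse).2 ⟨hp.reverse,
        by rwa [SimpleGraph.Walk.support_reverse, List.mem_reverse]⟩,
      (hru.trans ⟨p⟩).trans hz.symm.reachable,
      by simp [SimpleGraph.Walk.length_cons, SimpleGraph.Walk.length_reverse]⟩
    have := hmax _ hPl
    omega
  have hclose : ∀ x z : V, x ∈ p.support → G.Adj x z → z ∈ p.support := by
    intro x z hx hxz
    obtain ⟨t, ht, rfl⟩ := hsup x hx
    rcases Nat.eq_zero_or_pos t with rfl | htpos
    · apply hnbru
      rw [SimpleGraph.Walk.getVert_zero] at hxz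
      exact hxz.symm
    · rcases eq_or_ne t p.length with rfl | htM
      · apply hnbrw
        rw [SimpleGraph.Walk.getVert_length] at hxz
        exact hxz.symm
      · have h1 : G.Adj (p.getVert t) (p.getVert (t+1)) := hgadj t (by omega)
        have h2 : G.Adj (p.getVert t) (p.getVert (t-1)) := by
          have := hgadj (t-1) (by omega)
          rw [Nat.sub_add_cancel htpos] at this
          exact this.symm
        have hne : p.getVert (t+1) ≠ p.getVert (t-1) := by
          intro hcon
          have := hinj (t+1) (by omega) (t-1) (by omega) hcon
          omega
        rcases deg2 hdeg h1 h2 hxz hne with rfl | rfl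
        · exact hmem _ (by omega)
        · exact hmem _ (by omega)
  have hspan : ∀ x, G.Reachable v0 x → x ∈ p.support := by
    intro x hx
    obtain ⟨q⟩ := hru.symm.trans hx
    have key : ∀ (y z' : V) (q : G.Walk y z'), y ∈ p.support → z' ∈ p.support := by
      intro y z' q
      induction q with
      | nil => exact id
      | cons h q ih => intro hy; exact ih (hclose _ _ hy h)
    exact key u x q p.start_mem_support
  have hspaniff : ∀ x, G.Reachable v0 x ↔ x ∈ p.support := fun x => ⟨hspan x, hreach x⟩
  have hv0s : v0 ∈ p.support := hspan v0 (SimpleGraph.Reachable.refl v0)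
  have hlen2 : 2 ≤ p.length := by
    obtain ⟨t0, ht0, he0⟩ := hsup v0 hv0s
    obtain ⟨t1, ht1, he1⟩ := hsup x0 (hclose _ _ hv0s hx0.symm)
    obtain ⟨t2, ht2, he2⟩ := hsup z0 (hclose _ _ hv0s hz0)
    have d01 : t1 ≠ t0 := by intro h; apply hx0.ne; rw [he1, he0, h]
    have d02 : t2 ≠ t0 := by intro h; apply hz0.ne'; rw [he2, he0, h]
    have d12 : t1 ≠ t2 := by intro h; apply hxz0; rw [he1, he2, h]
    omega
  refine ⟨u, w, p, hp, hspaniff, ?_⟩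
  by_cases hcyc : G.Adj w u
  · -- component is a cycle; its length is divisible by 3
    have h3 : (p.length + 1) % 3 = 0 := by
      have hnotedge : s(u, w) ∉ p.reverse.edges := by
        rw [SimpleGraph.Walk.edges_reverse, List.mem_reverse]
        intro hmem'
        obtain ⟨i, hi, hei⟩ := edge_eq_getVert p _ hmem'
        rw [Sym2.eq_iff] at hei
        rcases hei with ⟨h1, h2⟩ | ⟨h1, h2⟩
        · have hi0 : i = 0 := hinj i (by omega) 0 (by omega)
            (by rw [← h1, SimpleGraph.Walk.getVert_zero])
          have : p.length = 1 := hinj p.length le_rfl 1 (by omega)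
            (by subst hi0; rw [SimpleGraph.Walk.getVert_length]; exact h2)
          omega
        · have : i + 1 = 0 := hinj (i+1) (by omega) 0 (by omega)
            (by rw [← h1, SimpleGraph.Walk.getVert_zero])
          omega
      have hcycIs : (SimpleGraph.Walk.cons hcyc.symm p.reverse).IsCycle :=
        (SimpleGraph.Walk.cons_isCycle_iff p.reverse hcyc.symm).2 ⟨hp.reverse, hnotedge⟩
      have hclen : (SimpleGraph.Walk.cons hcyc.symm p.reverse).length = p.length + 1 := by
        simp [SimpleGraph.Walk.length_cons, SimpleGraph.Walk.length_reverse]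
      by_contra hmod
      obtain ⟨ha, hb⟩ := hcycle ((p.length + 1) / 3) (by omega) u _ hcycIs
      rw [hclen] at ha hb
      omega
    intro x y z hxy hyz hxz hysup
    obtain ⟨t, ht, rfl⟩ := hsup y hysup
    rcases Nat.eq_zero_or_pos t with rfl | htpos
    · have hal : G.Adj (p.getVert 0) (p.getVert p.length) := by
        rw [SimpleGraph.Walk.getVert_zero, SimpleGraph.Walk.getVert_length]
        exact hcyc.symm
      have har : G.Adj (p.getVert 0) (p.getVert 1) := hgadj 0 (by omega)
      have hlr : p.getVert p.length ≠ p.getVert 1 := by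
        intro hcon
        have := hinj p.length le_rfl 1 (by omega) hcon
        omega
      rcases deg2 hdeg hal har hxy.symm hlr with rfl | rfl <;>
        rcases deg2 hdeg hal har hyz hlr with rfl | rfl
      · exact absurd rfl hxz
      · exact ⟨p.length, 0, 1, le_rfl, by omega, by omega, rfl, rfl, rfl,
          by omega, by omega, by omega⟩
      · exact ⟨1, 0, p.length, by omega, by omega, le_rfl, rfl, rfl, rfl,
          by omega, by omega, by omega⟩
      · exact absurd rfl hxz
    · rcases eq_or_ne t p.length with rfl | htM
      · have hal : G.Adj (p.getVert p.length) (p.getVert (p.length - 1)) := by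
          have := hgadj (p.length - 1) (by omega)
          rw [Nat.sub_add_cancel (by omega)] at this
          exact this.symm
        have har : G.Adj (p.getVert p.length) (p.getVert 0) := by
          rw [SimpleGraph.Walk.getVert_zero, SimpleGraph.Walk.getVert_length]
          exact hcyc
        have hlr : p.getVert (p.length - 1) ≠ p.getVert 0 := by
          intro hcon
          have := hinj (p.length - 1) (by omega) 0 (by omega) hcon
          omega
        rcases deg2 hdeg hal har hxy.symm hlr with rfl | rfl <;>
          rcases deg2 hdeg hal har hyz hlr with rfl | rfl
        · exact absurd rfl hxz
        · exact ⟨p.length - 1, p.length, 0, by omega, le_rfl, by omega, rfl, rfl, rfl,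
            by omega, by omega, by omega⟩
        · exact ⟨0, p.length, p.length - 1, by omega, le_rfl, by omega, rfl, rfl, rfl,
            by omega, by omega, by omega⟩
        · exact absurd rfl hxz
      · have h1 : G.Adj (p.getVert t) (p.getVert (t+1)) := hgadj t (by omega)
        have h2 : G.Adj (p.getVert t) (p.getVert (t-1)) := by
          have := hgadj (t-1) (by omega)
          rw [Nat.sub_add_cancel htpos] at this
          exact this.symm
        have hne : p.getVert (t+1) ≠ p.getVert (t-1) := by
          intro hcon
          have := hinj (t+1) (by omega) (t-1) (by omega) hcon
          omega
        rcases deg2 hdeg h1 h2 hxy.symm hne with rfl | rfl <;>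
          rcases deg2 hdeg h1 h2 hyz hne with rfl | rfl
        · exact absurd rfl hxz
        · exact ⟨t+1, t, t-1, by omega, ht, by omega, rfl, rfl, rfl,
            by omega, by omega, by omega⟩
        · exact ⟨t-1, t, t+1, by omega, ht, by omega, rfl, rfl, rfl,
            by omega, by omega, by omega⟩
        · exact absurd rfl hxz
  · -- component is a path
    have hnbr0 : ∀ z', G.Adj z' (p.getVert 0) → z' = p.getVert 1 := by
      intro z' hz'
      rw [SimpleGraph.Walk.getVert_zero] at hz'
      obtain ⟨s, hs, rfl⟩ := hsup z' (hnbru z' hz')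
      have hs0 : s ≠ 0 := by
        intro h
        subst h
        rw [SimpleGraph.Walk.getVert_zero] at hz'
        exact G.loopless.irrefl _ hz'
      rcases eq_or_ne s 1 with rfl | hs1
      · rfl
      · exfalso
        rcases eq_or_ne s p.length with rfl | hsM
        · rw [SimpleGraph.Walk.getVert_length] at hz'
          exact hcyc hz'
        · have h1 : G.Adj (p.getVert s) (p.getVert (s+1)) := hgadj s (by omega)
          have h2 : G.Adj (p.getVert s) (p.getVert (s-1)) := by
            have := hgadj (s-1) (by omega)
            rw [Nat.sub_add_cancel (by omega)] at this
            exact this.symm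
          have hne : p.getVert (s+1) ≠ p.getVert (s-1) := by
            intro hcon
            have := hinj (s+1) (by omega) (s-1) (by omega) hcon
            omega
          have hu' : G.Adj (p.getVert s) u := hz'
          rcases deg2 hdeg h1 h2 hu' hne with hcon | hcon
          · have := hinj 0 (by omega) (s+1) (by omega)
              (by rw [SimpleGraph.Walk.getVert_zero]; exact hcon)
            omega
          · have := hinj 0 (by omega) (s-1) (by omega)
              (by rw [SimpleGraph.Walk.getVert_zero]; exact hcon)
            omega
    have hnbrM : ∀ z', G.Adj z' (p.getVert p.length) → z' = p.getVert (p.length - 1) := by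
      intro z' hz'
      rw [SimpleGraph.Walk.getVert_length] at hz'
      obtain ⟨s, hs, rfl⟩ := hsup z' (hnbrw z' hz')
      have hsM : s ≠ p.length := by
        intro h
        subst h
        rw [SimpleGraph.Walk.getVert_length] at hz'
        exact G.loopless.irrefl _ hz'
      rcases eq_or_ne s (p.length - 1) with rfl | hs1
      · rfl
      · exfalso
        rcases eq_or_ne s 0 with rfl | hs0
        · rw [SimpleGraph.Walk.getVert_zero] at hz'
          exact hcyc hz'.symm
        · have h1 : G.Adj (p.getVert s) (p.getVert (s+1)) := hgadj s (by omega)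
          have h2 : G.Adj (p.getVert s) (p.getVert (s-1)) := by
            have := hgadj (s-1) (by omega)
            rw [Nat.sub_add_cancel (by omega)] at this
            exact this.symm
          have hne : p.getVert (s+1) ≠ p.getVert (s-1) := by
            intro hcon
            have := hinj (s+1) (by omega) (s-1) (by omega) hcon
            omega
          have hw' : G.Adj (p.getVert s) (p.getVert p.length) := by
            rw [SimpleGraph.Walk.getVert_length]
            exact hz'
          rcases deg2 hdeg h1 h2 hw' hne with hcon | hcon
          · have := hinj p.length le_rfl (s+1) (by omega) hcon
            omega
          · have := hinj p.length le_rfl (s-1) (by omega) hcon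
            omega
    intro x y z hxy hyz hxz hysup
    obtain ⟨t, ht, rfl⟩ := hsup y hysup
    rcases Nat.eq_zero_or_pos t with rfl | htpos
    · exact absurd (by rw [hnbr0 x hxy, hnbr0 z hyz.symm]) hxz
    · rcases eq_or_ne t p.length with rfl | htM
      · exact absurd (by rw [hnbrM x hxy, hnbrM z hyz.symm]) hxz
      · have h1 : G.Adj (p.getVert t) (p.getVert (t+1)) := hgadj t (by omega)
        have h2 : G.Adj (p.getVert t) (p.getVert (t-1)) := by
          have := hgadj (t-1) (by omega)
          rw [Nat.sub_add_cancel htpos] at this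
          exact this.symm
        have hne : p.getVert (t+1) ≠ p.getVert (t-1) := by
          intro hcon
          have := hinj (t+1) (by omega) (t-1) (by omega) hcon
          omega
        rcases deg2 hdeg h1 h2 hxy.symm hne with rfl | rfl <;>
          rcases deg2 hdeg h1 h2 hyz hne with rfl | rfl
        · exact absurd rfl hxz
        · exact ⟨t+1, t, t-1, by omega, ht, by omega, rfl, rfl, rfl,
            by omega, by omega, by omega⟩
        · exact ⟨t-1, t, t+1, by omega, ht, by omega, rfl, rfl, rfl,
            by omega, by omega, by omega⟩
        · exact absurd rfl hxz


end Stmt15Aux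

set_option maxHeartbeats 1000000 in
/-- Let `G` be a finite simple graph with all degrees at most 2 and no
cycle of length `3i+1` or `3i+2` for any positive integer `i`. Let `D` be a set of vertices
containing no path on three distinct vertices of `G`. If `p_1, …, p_{e+1}` and
`p'_1, …, p'_e` are paths on three distinct vertices of `G` such that the monomial
`∏ m(p_j)` divides `(∏ m(p'_j)) · ∏_{z ∈ D} x_z` in `k[x_v : v ∈ V]`, then there exist a
positive integer `i` and two distinct vertices `z₁, z₂ ∈ D` joined in `G` by a path of
length `3i+1` or `3i+2`. -/
theorem exists_long_path_of_dvd
    (K : Type*) [Field K] {V : Type*} [Fintype V] [DecidableEq V]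
    (G : SimpleGraph V) [DecidableRel G.Adj]
    -- every vertex has degree at most 2
    (hdeg : ∀ v : V, G.degree v ≤ 2)
    -- no cycle of length `3i+1` or `3i+2` for any positive integer `i`
    (hcycle : ∀ i : ℕ, 1 ≤ i → ∀ (v : V) (p : G.Walk v v), p.IsCycle →
      p.length ≠ 3 * i + 1 ∧ p.length ≠ 3 * i + 2)
    (D : Finset V)
    -- no path on three distinct vertices of `G` has all its vertices in `D`
    (hD : ∀ u v w : V, G.Adj u v → G.Adj v w → u ≠ w →
      ¬(u ∈ D ∧ v ∈ D ∧ w ∈ D))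
    (e : ℕ)
    -- the paths `p_1, …, p_{e+1}` on three distinct vertices
    (a b c : Fin (e + 1) → V)
    (hp : ∀ j : Fin (e + 1), G.Adj (a j) (b j) ∧ G.Adj (b j) (c j) ∧ a j ≠ c j)
    -- the paths `p'_1, …, p'_e` on three distinct vertices
    (a' b' c' : Fin e → V)
    (hp' : ∀ j : Fin e, G.Adj (a' j) (b' j) ∧ G.Adj (b' j) (c' j) ∧ a' j ≠ c' j)
    -- the divisibility hypothesis in the polynomial ring `K[x_v : v ∈ V]`
    (hdvd : (∏ j : Fin (e + 1), (X (a j) * X (b j) * X (c j) : MvPolynomial V K)) ∣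
      (∏ j : Fin e, (X (a' j) * X (b' j) * X (c' j) : MvPolynomial V K)) * ∏ z ∈ D, X z) :
    ∃ i : ℕ, 1 ≤ i ∧ ∃ z₁ ∈ D, ∃ z₂ ∈ D, z₁ ≠ z₂ ∧
      ∃ p : G.Walk z₁ z₂, p.IsPath ∧ (p.length = 3 * i + 1 ∨ p.length = 3 * i + 2) := by
  classical
  -- Step 1: from divisibility to a vertex multiplicity inequality
  have hXmono : ∀ (x y z : V),
      (X x * X y * X z : MvPolynomial V K)
        = monomial (Finsupp.single x 1 + Finsupp.single y 1 + Finsupp.single z 1) 1 := by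
    intro x y z
    have h0 : (X x * X y * X z : MvPolynomial V K)
        = monomial (Finsupp.single x 1) 1 * monomial (Finsupp.single y 1) 1
          * monomial (Finsupp.single z 1) 1 := rfl
    rw [h0, monomial_mul, monomial_mul, one_mul, one_mul]
  have hL : (∏ j : Fin (e + 1), (X (a j) * X (b j) * X (c j) : MvPolynomial V K))
      = monomial (∑ j : Fin (e + 1),
          (Finsupp.single (a j) 1 + Finsupp.single (b j) 1 + Finsupp.single (c j) 1)) (1 : K) := by
    rw [MvPolynomial.monomial_sum_one]
    exact Finset.prod_congr rfl fun j _ => hXmono (a j) (b j) (c j)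
  have hR : ((∏ j : Fin e, (X (a' j) * X (b' j) * X (c' j) : MvPolynomial V K)) * ∏ z ∈ D, X z)
      = monomial ((∑ j : Fin e,
          (Finsupp.single (a' j) 1 + Finsupp.single (b' j) 1 + Finsupp.single (c' j) 1))
          + ∑ z ∈ D, Finsupp.single z 1) (1 : K) := by
    have h1 : (∏ j : Fin e, (X (a' j) * X (b' j) * X (c' j) : MvPolynomial V K))
        = monomial (∑ j : Fin e,
            (Finsupp.single (a' j) 1 + Finsupp.single (b' j) 1 + Finsupp.single (c' j) 1)) (1 : K) := by
      rw [MvPolynomial.monomial_sum_one]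
      exact Finset.prod_congr rfl fun j _ => hXmono (a' j) (b' j) (c' j)
    have h2 : (∏ z ∈ D, (X z : MvPolynomial V K))
        = monomial (∑ z ∈ D, Finsupp.single z 1) (1 : K) := by
      rw [MvPolynomial.monomial_sum_one]
      exact Finset.prod_congr rfl fun z _ => rfl
    rw [h1, h2, monomial_mul, one_mul]
  rw [hL, hR, MvPolynomial.monomial_dvd_monomial] at hdvd
  have hSle := hdvd.1.resolve_left one_ne_zero
  have hcount : ∀ v : V,
      (∑ j : Fin (e + 1), ((if a j = v then 1 else 0) + (if b j = v then 1 else 0)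
        + (if c j = v then 1 else 0)))
      ≤ (∑ j : Fin e, ((if a' j = v then 1 else 0) + (if b' j = v then 1 else 0)
        + (if c' j = v then 1 else 0))) + (if v ∈ D then 1 else 0) := by
    intro v
    have h := Finsupp.le_def.mp hSle v
    rw [Finsupp.finset_sum_apply] at h
    rw [Finsupp.add_apply, Finsupp.finset_sum_apply, Finsupp.finset_sum_apply] at h
    simp only [Finsupp.add_apply, Finsupp.single_apply] at h
    have hd : (∑ z ∈ D, if z = v then (1:ℕ) else 0) = if v ∈ D then 1 else 0 := by
      rw [Finset.sum_ite_eq' D v (fun _ => (1:ℕ))]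
    rw [hd] at h
    exact h
  -- Step 2: find a component with more triples than primed triples
  haveI : Fintype G.ConnectedComponent := Fintype.ofFinite _
  have hsumA : ∑ Kc : G.ConnectedComponent,
      (Finset.univ.filter (fun j => G.connectedComponentMk (b j) = Kc)).card = e + 1 := by
    have := Finset.card_eq_sum_card_fiberwise
      (fun (x : Fin (e + 1)) (_ : x ∈ Finset.univ) =>
        Finset.mem_univ (G.connectedComponentMk (b x)))
    rw [← this, Finset.card_univ, Fintype.card_fin]
  have hsumB : ∑ Kc : G.ConnectedComponent,
      (Finset.univ.filter (fun j => G.connectedComponentMk (b' j) = Kc)).card = e := by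
    have := Finset.card_eq_sum_card_fiberwise
      (fun (x : Fin e) (_ : x ∈ Finset.univ) =>
        Finset.mem_univ (G.connectedComponentMk (b' x)))
    rw [← this, Finset.card_univ, Fintype.card_fin]
  have hex : ∃ Kc ∈ (Finset.univ : Finset G.ConnectedComponent),
      (Finset.univ.filter (fun j => G.connectedComponentMk (b' j) = Kc)).card
      < (Finset.univ.filter (fun j => G.connectedComponentMk (b j) = Kc)).card := by
    apply Finset.exists_lt_of_sum_lt
    rw [hsumA, hsumB]
    omega
  obtain ⟨Kc, -, hKlt⟩ := hex
  have hfib : (Finset.univ.filter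
      (fun j => G.connectedComponentMk (b j) = Kc)).Nonempty :=
    Finset.card_pos.1 (by omega)
  obtain ⟨j0, hj0mem⟩ := hfib
  have hj0 : G.connectedComponentMk (b j0) = Kc := (Finset.mem_filter.1 hj0mem).2
  subst hj0
  -- Step 3: the spanning path of the component of `b j0`
  obtain ⟨u, w, p, hppath, hspaniff, hTRI⟩ := Stmt15Aux.exists_spanning_path hdeg hcycle (b j0)
    ⟨a j0, c j0, (hp j0).1, (hp j0).2.1, (hp j0).2.2⟩
  have hsupp_iff : ∀ x : V, x ∈ p.support ↔
      G.connectedComponentMk x = G.connectedComponentMk (b j0) := by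
    intro x
    rw [← hspaniff, SimpleGraph.ConnectedComponent.eq]
    exact ⟨fun h => h.symm, fun h => h.symm⟩
  have hclose : ∀ x z : V, x ∈ p.support → G.Adj x z → z ∈ p.support := by
    intro x z hx hxz
    rw [← hspaniff] at hx ⊢
    exact hx.trans hxz.reachable
  have hinj := Stmt15Aux.getVert_injOn' hppath
  -- Step 4: for each residue class mod 3 there is a vertex of `D` on the path
  have hres : ∀ r, r < 3 → ∃ t, t ≤ p.length ∧ t % 3 = r ∧ p.getVert t ∈ D := by
    intro r hr
    set T : Finset ℕ := (Finset.range (p.length + 1)).filter (fun t => t % 3 = r) with hT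
    have hsingle : ∀ x : V,
        (∑ t ∈ T, (if x = p.getVert t then (1:ℕ) else 0))
        = (if ∃ s, s ≤ p.length ∧ s % 3 = r ∧ x = p.getVert s then 1 else 0) := by
      intro x
      by_cases hex2 : ∃ s, s ≤ p.length ∧ s % 3 = r ∧ x = p.getVert s
      · obtain ⟨s, hs1, hs2, hs3⟩ := hex2
        rw [if_pos ⟨s, hs1, hs2, hs3⟩]
        have hcg : ∀ t ∈ T, (if x = p.getVert t then (1:ℕ) else 0)
            = (if t = s then 1 else 0) := by
          intro t htT
          have htb : t ≤ p.length ∧ t % 3 = r := by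
            have := Finset.mem_filter.1 htT
            exact ⟨by have := Finset.mem_range.1 this.1; omega, this.2⟩
          by_cases hts : t = s
          · subst hts
            rw [if_pos hs3, if_pos rfl]
          · rw [if_neg, if_neg hts]
            intro hcon
            exact hts (hinj t htb.1 s hs1 (by rw [← hcon, ← hs3]))
        rw [Finset.sum_congr rfl hcg, Finset.sum_ite_eq' T s (fun _ => (1:ℕ)),
          if_pos (show s ∈ T from Finset.mem_filter.2 ⟨Finset.mem_range.2 (by omega), hs2⟩)]
      · rw [if_neg hex2]
        apply Finset.sum_eq_zero
        intro t htT
        rw [if_neg]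
        intro hcon
        have := Finset.mem_filter.1 htT
        exact hex2 ⟨t, by have := Finset.mem_range.1 this.1; omega, this.2, hcon⟩
    have hone : ∀ (x y z : V), G.Adj x y → G.Adj y z → x ≠ z →
        (∑ t ∈ T, ((if x = p.getVert t then (1:ℕ) else 0) + (if y = p.getVert t then 1 else 0)
          + (if z = p.getVert t then 1 else 0)))
        = (if y ∈ p.support then 1 else 0) := by
      intro x y z hxy hyz hxz
      rw [Finset.sum_add_distrib, Finset.sum_add_distrib, hsingle x, hsingle y, hsingle z]
      by_cases hy : y ∈ p.support
      · obtain ⟨t₁, t₂, t₃, hq1, hq2, hq3, he1, he2, he3, hr12, hr23, hr13⟩ :=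
          hTRI x y z hxy hyz hxz hy
        rw [if_pos hy]
        have key : ∀ (xx : V) (tt : ℕ), tt ≤ p.length → xx = p.getVert tt →
            ((if ∃ s, s ≤ p.length ∧ s % 3 = r ∧ xx = p.getVert s then (1:ℕ) else 0))
            = (if tt % 3 = r then 1 else 0) := by
          intro xx tt htt hxx
          by_cases hmod : tt % 3 = r
          · rw [if_pos hmod, if_pos ⟨tt, htt, hmod, hxx⟩]
          · rw [if_neg hmod, if_neg]
            rintro ⟨s, hs1, hs2, hs3⟩
            exact hmod (by rw [hinj tt htt s hs1 (by rw [← hxx, ← hs3])]; exact hs2)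
        rw [key x t₁ hq1 he1, key y t₂ hq2 he2, key z t₃ hq3 he3]
        split_ifs <;> omega
      · rw [if_neg hy]
        have hmemgv : ∀ (xx : V), (∃ s, s ≤ p.length ∧ s % 3 = r ∧ xx = p.getVert s) →
            xx ∈ p.support := by
          rintro xx ⟨s, hs1, _, rfl⟩
          exact SimpleGraph.Walk.mem_support_iff_exists_getVert.2 ⟨s, rfl, hs1⟩
        rw [if_neg (fun hc => hy (hclose _ _ (hmemgv x hc) hxy)),
          if_neg (fun hc => hy (hmemgv y hc)),
          if_neg (fun hc => hy (hclose _ _ (hmemgv z hc) hyz.symm))]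
    have hsum1 : (∑ t ∈ T, ∑ j : Fin (e + 1), ((if a j = p.getVert t then (1:ℕ) else 0)
          + (if b j = p.getVert t then 1 else 0) + (if c j = p.getVert t then 1 else 0)))
        = (Finset.univ.filter
            (fun j => G.connectedComponentMk (b j) = G.connectedComponentMk (b j0))).card := by
      rw [Finset.sum_comm]
      rw [Finset.sum_congr rfl (fun j _ => hone (a j) (b j) (c j) (hp j).1 (hp j).2.1 (hp j).2.2)]
      rw [Finset.sum_boole]
      rw [Nat.cast_id]
      congr 1
      apply Finset.filter_congr
      intro j _
      simp only [hsupp_iff (b j)]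
    have hsum2 : (∑ t ∈ T, ∑ j : Fin e, ((if a' j = p.getVert t then (1:ℕ) else 0)
          + (if b' j = p.getVert t then 1 else 0) + (if c' j = p.getVert t then 1 else 0)))
        = (Finset.univ.filter
            (fun j => G.connectedComponentMk (b' j) = G.connectedComponentMk (b j0))).card := by
      rw [Finset.sum_comm]
      rw [Finset.sum_congr rfl
        (fun j _ => hone (a' j) (b' j) (c' j) (hp' j).1 (hp' j).2.1 (hp' j).2.2)]
      rw [Finset.sum_boole]
      rw [Nat.cast_id]
      congr 1
      apply Finset.filter_congr
      intro j _
      simp only [hsupp_iff (b' j)]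
    have hle : (∑ t ∈ T, ∑ j : Fin (e + 1), ((if a j = p.getVert t then (1:ℕ) else 0)
          + (if b j = p.getVert t then 1 else 0) + (if c j = p.getVert t then 1 else 0)))
        ≤ (∑ t ∈ T, ∑ j : Fin e, ((if a' j = p.getVert t then (1:ℕ) else 0)
          + (if b' j = p.getVert t then 1 else 0) + (if c' j = p.getVert t then 1 else 0)))
          + ∑ t ∈ T, (if p.getVert t ∈ D then (1:ℕ) else 0) := by
      rw [← Finset.sum_add_distrib]
      exact Finset.sum_le_sum (fun t _ => hcount (p.getVert t))
    rw [hsum1, hsum2, Finset.sum_boole, Nat.cast_id] at hle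
    have hpos : 0 < (T.filter (fun t => p.getVert t ∈ D)).card := by omega
    obtain ⟨t, htmem⟩ := Finset.card_pos.1 hpos
    have h1 := Finset.mem_filter.1 htmem
    have h2 := Finset.mem_filter.1 h1.1
    exact ⟨t, by have := Finset.mem_range.1 h2.1; omega, h2.2, h1.2⟩
  -- Step 5: conclude
  obtain ⟨t0, hq0, hm0, hd0⟩ := hres 0 (by omega)
  obtain ⟨t1, hq1, hm1, hd1⟩ := hres 1 (by omega)
  obtain ⟨t2, hq2, hm2, hd2⟩ := hres 2 (by omega)
  exact Stmt15Aux.endgame hppath D hD hq0 hq1 hq2 (by omega) (by omega) (by omega) hd0 hd1 hd2
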